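/- arXiv:1403.6096 — 8 statements merged into one kernel-verified Lean document; each statement's English description precedes it below -/
import Mathlib

section
/- Let σ = (λ₁,...,λ₅) be a list of complex numbers and let g be a root of Q_σ(z) = 2z³ - 2(λ₃+λ₅)z² - (e₂(σ) + (λ₃-λ₅)²)z + e₃(σ) + e₁(σ)(λ₃²+λ₅²). Then the characteristic polynomial of the 5×5 symmetric matrix B(σ,g) equals (z-λ₁)(z-λ₂)(z-λ₃)(z-λ₄)(z-λ₅). -/
open Polynomial

/-- Principal square root of a complex number. -/
noncomputable def csqrt (z : ℂ) : ℂ := z ^ ((1 : ℂ) / 2)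

/-- The matrix pattern `B(σ, g)` of the paper. -/
noncomputable def patternB (l1 l2 l3 l4 l5 g : ℂ) : Matrix (Fin 5) (Fin 5) ℂ :=
  let e1 : ℂ := l1 + l2 + l3 + l4 + l5
  let e2 : ℂ := l1*l2+l1*l3+l1*l4+l1*l5+l2*l3+l2*l4+l2*l5+l3*l4+l3*l5+l4*l5
  let k : ℂ := g - l3 - l5
  let l : ℂ := (g - l3) * (l5 - g)
  let m : ℂ := -g^2 + e1 * g - (1/2) * (e2 + l3^2 + l5^2)
  !![g, csqrt l, csqrt m, 0, 0;
     csqrt l, 0, 0, 0, k;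
     csqrt m, 0, e1 - 2*g, csqrt m, 0;
     0, 0, csqrt m, g, csqrt l;
     0, k, 0, csqrt l, 0]

/-! The off-diagonal entries of `B(σ, g)` sit on the 5-cycle `0 - 1 - 4 - 3 - 2 - 0`, so they enter
its characteristic polynomial only through their squares (the two 5-cycle terms of the determinant
give `2 l m k`) and the square roots disappear. Expanding then gives, for every `g`,
`charpoly B(σ, g) = ∏ (X - λᵢ) + Q_σ(g) (X - λ₃)(X - λ₅)`. -/

section PentagonMatrix

variable {R : Type*} [CommRing R]

def pentagonMatrix (d e k a b : R) : Matrix (Fin 5) (Fin 5) R :=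
  !![d, a, b, 0, 0;
     a, 0, 0, 0, k;
     b, 0, e, b, 0;
     0, 0, b, d, a;
     0, k, 0, a, 0]

theorem charpoly_pentagonMatrix (d e k a b : R) :
    (pentagonMatrix d e k a b).charpoly =
      X ^ 5 - C (2 * d + e) * X ^ 4
        + C (d ^ 2 + 2 * d * e - 2 * a ^ 2 - 2 * b ^ 2 - k ^ 2) * X ^ 3
        - C (d ^ 2 * e - 2 * a ^ 2 * (d + e) - 2 * b ^ 2 * d - k ^ 2 * (2 * d + e)) * X ^ 2
        + C ((a ^ 2) ^ 2 + 2 * a ^ 2 * b ^ 2 + 2 * b ^ 2 * k ^ 2 - 2 * a ^ 2 * d * e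
            - k ^ 2 * d ^ 2 - 2 * k ^ 2 * d * e) * X
        - C ((a ^ 2) ^ 2 * e + 2 * b ^ 2 * k ^ 2 * d + 2 * a ^ 2 * b ^ 2 * k
            - k ^ 2 * d ^ 2 * e) := by
  simp [Matrix.charpoly, Matrix.det_succ_row_zero, Fin.sum_univ_succ, Fin.succAbove,
    pentagonMatrix, Matrix.charmatrix_apply, C_ofNat]
  ring

end PentagonMatrix

theorem csqrt_sq (z : ℂ) : csqrt z ^ 2 = z := by
  simp only [csqrt, one_div, Complex.cpow_ofNat_inv_pow]

/-- The cubic `Q_σ` of the paper, evaluated at `z`. -/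
def patternQ (l1 l2 l3 l4 l5 z : ℂ) : ℂ :=
  2*z^3 - 2*(l3 + l5)*z^2
    - ((l1*l2+l1*l3+l1*l4+l1*l5+l2*l3+l2*l4+l2*l5+l3*l4+l3*l5+l4*l5) + (l3 - l5)^2) * z
    + (l1*l2*l3+l1*l2*l4+l1*l2*l5+l1*l3*l4+l1*l3*l5+l1*l4*l5+l2*l3*l4+l2*l3*l5+l2*l4*l5+l3*l4*l5)
    + (l1 + l2 + l3 + l4 + l5) * (l3^2 + l5^2)

theorem patternB_eq_pentagonMatrix (l1 l2 l3 l4 l5 g : ℂ) :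
    patternB l1 l2 l3 l4 l5 g =
      pentagonMatrix g (l1 + l2 + l3 + l4 + l5 - 2 * g) (g - l3 - l5)
        (csqrt ((g - l3) * (l5 - g)))
        (csqrt (-g^2 + (l1 + l2 + l3 + l4 + l5) * g
          - (1/2) * ((l1*l2+l1*l3+l1*l4+l1*l5+l2*l3+l2*l4+l2*l5+l3*l4+l3*l5+l4*l5)
            + l3^2 + l5^2))) :=
  rfl

theorem charpoly_patternB (l1 l2 l3 l4 l5 g : ℂ) :
    (patternB l1 l2 l3 l4 l5 g).charpoly =
      (X - C l1) * (X - C l2) * (X - C l3) * (X - C l4) * (X - C l5)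
        + C (patternQ l1 l2 l3 l4 l5 g) * (X - C l3) * (X - C l5) := by
  rw [patternB_eq_pentagonMatrix, charpoly_pentagonMatrix, csqrt_sq, csqrt_sq]
  refine Polynomial.funext fun x => ?_
  simp only [eval_add, eval_sub, eval_mul, eval_pow, eval_C, eval_X, patternQ]
  ring

theorem stmt1 (l1 l2 l3 l4 l5 g : ℂ)
    (hg : 2*g^3 - 2*(l3 + l5)*g^2
        - ((l1*l2+l1*l3+l1*l4+l1*l5+l2*l3+l2*l4+l2*l5+l3*l4+l3*l5+l4*l5) + (l3 - l5)^2) * g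
        + (l1*l2*l3+l1*l2*l4+l1*l2*l5+l1*l3*l4+l1*l3*l5+l1*l4*l5+l2*l3*l4+l2*l3*l5+l2*l4*l5+l3*l4*l5)
        + (l1 + l2 + l3 + l4 + l5) * (l3^2 + l5^2) = 0) :
    (patternB l1 l2 l3 l4 l5 g).charpoly =
      (X - C l1) * (X - C l2) * (X - C l3) * (X - C l4) * (X - C l5) := by
  have hQ : patternQ l1 l2 l3 l4 l5 g = 0 := hg
  rw [charpoly_patternB, hQ, C_0, zero_mul, zero_mul, add_zero]
end

section
/- Let σ = (λ₁,...,λ₅) be a list of real numbers satisfying λ₁ ≥ λ₂ ≥ λ₃ ≥ λ₄ ≥ λ₅ > -λ₁, λ₁+λ₂+λ₃+λ₄+λ₅ ≥ 0, λ₃ > λ₁+λ₂+λ₃+λ₄+λ₅, and r(σ) = e₃(σ) + e₁(σ)(λ₂²+λ₅²) ≥ 0. Then u(σ) = -e₂(σ) - λ₂² - λ₅² > 0. -/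
/-!
Since `2 e₂ = e₁² - ∑ λᵢ²`, we have `2 u = (λ₁² - λ₅²) + (λ₄² - λ₂²) + (λ₃² - e₁²)`.
From `0 ≤ e₁ < λ₃` we get `e₁² < λ₃²` and `λ₂ ≥ λ₃ > 0`. Subtracting `λ₃` and using
`λ₁ + λ₅ > 0` gives `λ₂ + λ₄ < 0`, so `λ₅ ≤ λ₄ < -λ₂ < 0`; hence `λ₂² < λ₄²` and `λ₅² < λ₁²`.
-/

theorem stmt2_general (l1 l2 l3 l4 l5 : ℝ)
    (h23 : l2 ≥ l3) (h45 : l4 ≥ l5) (h5 : l5 > -l1)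
    (htrace : l1 + l2 + l3 + l4 + l5 ≥ 0)
    (h3 : l3 > l1 + l2 + l3 + l4 + l5) :
    -(l1*l2+l1*l3+l1*l4+l1*l5+l2*l3+l2*l4+l2*l5+l3*l4+l3*l5+l4*l5) - l2^2 - l5^2 > 0 := by
  have hl2 : 0 < l2 := (htrace.trans_lt h3).trans_le h23
  have hl4 : l4 < -l2 := by linarith
  have h15 : l5 ^ 2 < l1 ^ 2 := sq_lt_sq' h5 (by linarith)
  have h24 : l2 ^ 2 < l4 ^ 2 := by
    rw [← neg_sq l4]
    exact sq_lt_sq' (by linarith) (by linarith)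
  have htrace_sq : (l1 + l2 + l3 + l4 + l5) ^ 2 < l3 ^ 2 := sq_lt_sq' (by linarith) h3
  linear_combination (h15 + h24 + htrace_sq) / 2

theorem stmt2 (l1 l2 l3 l4 l5 : ℝ)
    (h12 : l1 ≥ l2) (h23 : l2 ≥ l3) (h34 : l3 ≥ l4) (h45 : l4 ≥ l5) (h5 : l5 > -l1)
    (htrace : l1 + l2 + l3 + l4 + l5 ≥ 0)
    (h3 : l3 > l1 + l2 + l3 + l4 + l5)
    (hr : (l1*l2*l3+l1*l2*l4+l1*l2*l5+l1*l3*l4+l1*l3*l5+l1*l4*l5+l2*l3*l4+l2*l3*l5+l2*l4*l5+l3*l4*l5)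
        + (l1 + l2 + l3 + l4 + l5) * (l2^2 + l5^2) ≥ 0) :
    -(l1*l2+l1*l3+l1*l4+l1*l5+l2*l3+l2*l4+l2*l5+l3*l4+l3*l5+l4*l5) - l2^2 - l5^2 > 0 :=
  stmt2_general l1 l2 l3 l4 l5 h23 h45 h5 htrace h3
end

section
/- Let σ = (λ₁,...,λ₅) be a list of real numbers satisfying λ₁ ≥ λ₂ ≥ λ₃ ≥ λ₄ ≥ λ₅ > -λ₁, e₁(σ) ≥ 0, λ₃ > e₁(σ), and r(σ) ≥ 0. Then w(σ) = λ₂λ₅e₁(σ) - λ₁λ₃λ₄ ≥ 0. -/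
/-! With `t = λ₃ - e₁ > 0` one has `w = t (λ₁λ₃ - λ₂λ₅) + λ₃ (λ₁ + λ₂)(λ₁ + λ₅)`. Here
`λ₃ > e₁ ≥ 0`, and `t > 0` reads `λ₄ + λ₅ < -(λ₁ + λ₂) < 0`, which forces `λ₅ < 0`; so every
factor is nonnegative. -/

theorem w_eq_sub_trace_mul_add {R : Type*} [CommRing R] (l1 l2 l3 l4 l5 : R) :
    l2 * l5 * (l1 + l2 + l3 + l4 + l5) - l1 * l3 * l4 =
      (l3 - (l1 + l2 + l3 + l4 + l5)) * (l1 * l3 - l2 * l5) + l3 * (l1 + l2) * (l1 + l5) := by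
  ring

theorem stmt3_general (l1 l2 l3 l4 l5 : ℝ)
    (h12 : l1 ≥ l2) (h23 : l2 ≥ l3) (h45 : l4 ≥ l5) (h5 : l5 > -l1)
    (htrace : l1 + l2 + l3 + l4 + l5 ≥ 0)
    (h3 : l3 > l1 + l2 + l3 + l4 + l5) :
    l2 * l5 * (l1 + l2 + l3 + l4 + l5) - l1 * l3 * l4 ≥ 0 := by
  have hl3 : 0 < l3 := by linarith
  have hl5 : l5 < 0 := by linarith
  have ht : 0 ≤ l3 - (l1 + l2 + l3 + l4 + l5) := by linarith
  have hcross : 0 ≤ l1 * l3 - l2 * l5 := by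
    linarith [mul_nonneg (by linarith : (0 : ℝ) ≤ l1) hl3.le,
      mul_nonneg (by linarith : (0 : ℝ) ≤ l2) (neg_nonneg.mpr hl5.le)]
  rw [ge_iff_le, w_eq_sub_trace_mul_add]
  exact add_nonneg (mul_nonneg ht hcross)
    (mul_nonneg (mul_nonneg hl3.le (by linarith)) (by linarith))

theorem stmt3 (l1 l2 l3 l4 l5 : ℝ)
    (h12 : l1 ≥ l2) (h23 : l2 ≥ l3) (h34 : l3 ≥ l4) (h45 : l4 ≥ l5) (h5 : l5 > -l1)
    (htrace : l1 + l2 + l3 + l4 + l5 ≥ 0)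
    (h3 : l3 > l1 + l2 + l3 + l4 + l5)
    (hr : (l1*l2*l3+l1*l2*l4+l1*l2*l5+l1*l3*l4+l1*l3*l5+l1*l4*l5+l2*l3*l4+l2*l3*l5+l2*l4*l5+l3*l4*l5)
        + (l1 + l2 + l3 + l4 + l5) * (l2^2 + l5^2) ≥ 0) :
    l2 * l5 * (l1 + l2 + l3 + l4 + l5) - l1 * l3 * l4 ≥ 0 :=
  stmt3_general l1 l2 l3 l4 l5 h12 h23 h45 h5 htrace h3
end

section
/- Let σ = (λ₁,...,λ₅) be a list of real numbers satisfying λ₁ ≥ λ₂ ≥ λ₃ ≥ λ₄ ≥ λ₅ > -λ₁, e₁(σ) ≥ 0, λ₃ > e₁(σ), and r(σ) ≥ 0. Then v(σ) = -(λ₃+λ₅)(λ₄+λ₅)(λ₂+λ₄)(λ₂+λ₃)(λ₁+λ₂)(λ₁+λ₅) > 0. -/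
theorem stmt4_general (l1 l2 l3 l4 l5 : ℝ)
    (h23 : l2 ≥ l3) (h45 : l4 ≥ l5) (h5 : l5 > -l1)
    (htrace : l1 + l2 + l3 + l4 + l5 ≥ 0)
    (h3 : l3 > l1 + l2 + l3 + l4 + l5) :
    -((l3 + l5) * (l4 + l5) * (l2 + l4) * (l2 + l3) * (l1 + l2) * (l1 + l5)) > 0 := by
  -- `l3 > e₁ ≥ 0`, while `l3 > e₁` also says `l2 + l4 < -(l1 + l5) < 0`.
  have pos15 : 0 < l1 + l5 := by linarith
  have pos12 : 0 < l1 + l2 := by linarith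
  have pos23 : 0 < l2 + l3 := by linarith
  have neg24 : l2 + l4 < 0 := by linarith
  have neg35 : l3 + l5 < 0 := by linarith
  have neg45 : l4 + l5 < 0 := by linarith
  exact neg_pos.mpr <| mul_neg_of_neg_of_pos (mul_neg_of_neg_of_pos (mul_neg_of_neg_of_pos
    (mul_neg_of_pos_of_neg (mul_pos_of_neg_of_neg neg35 neg45) neg24) pos23) pos12) pos15

theorem stmt4 (l1 l2 l3 l4 l5 : ℝ)
    (h12 : l1 ≥ l2) (h23 : l2 ≥ l3) (h34 : l3 ≥ l4) (h45 : l4 ≥ l5) (h5 : l5 > -l1)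
    (htrace : l1 + l2 + l3 + l4 + l5 ≥ 0)
    (h3 : l3 > l1 + l2 + l3 + l4 + l5)
    (hr : (l1*l2*l3+l1*l2*l4+l1*l2*l5+l1*l3*l4+l1*l3*l5+l1*l4*l5+l2*l3*l4+l2*l3*l5+l2*l4*l5+l3*l4*l5)
        + (l1 + l2 + l3 + l4 + l5) * (l2^2 + l5^2) ≥ 0) :
    -((l3 + l5) * (l4 + l5) * (l2 + l4) * (l2 + l3) * (l1 + l2) * (l1 + l5)) > 0 :=
  stmt4_general l1 l2 l3 l4 l5 h23 h45 h5 htrace h3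
end

section
/- Let σ = (λ₁,...,λ₅) be a list of real numbers with λ₁ ≥ λ₂ ≥ λ₃ ≥ λ₄ ≥ λ₅ = -λ₁, λ₁+λ₂+λ₃+λ₄+λ₅ ≥ 0, and λ₃ > λ₁+λ₂+λ₃+λ₄+λ₅. Then there is no 5×5 nonnegative real matrix whose multiset of eigenvalues is {λ₁, λ₂, λ₃, λ₄, λ₅}. -/
/-!
If `A ≥ 0` has spectrum `λ₁, …, λ₅`, then `0 ≤ tr (A ^ m) = ∑ λᵢ ^ m` for every `m`. For odd `m`
the terms of `λ₁` and `λ₅ = -λ₁` cancel, while `λ₂ + λ₄ < 0` (from `λ₃ > ∑ λᵢ`) and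
`λ₂ ≥ λ₃ > 0` make `λ₄ ^ m` outweigh `λ₂ ^ m + λ₃ ^ m` once `m` is large, so the trace is negative.
The identity `tr (p(B)) = ∑ p(λᵢ)` comes from `det (q(B)) = ∏ q(λᵢ)` over an algebraic closure,
by factoring `q` into linear factors.
-/

open Polynomial

namespace Matrix

variable {n : Type*} [Fintype n] [DecidableEq n]

section CommRing

variable {R : Type*} [CommRing R] [Nontrivial R]

theorem card_eq_of_charpoly_eq_prod {B : Matrix n n R} {s : Multiset R}
    (hB : B.charpoly = (s.map fun a => X - C a).prod) : Multiset.card s = Fintype.card n := by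
  rw [← natDegree_multiset_prod_X_sub_C_eq_card, ← hB, charpoly_natDegree_eq_dim]

theorem det_sub_scalar_eq_prod {B : Matrix n n R} {s : Multiset R}
    (hB : B.charpoly = (s.map fun a => X - C a).prod) (r : R) :
    (B - scalar n r).det = (s.map fun a => a - r).prod := by
  have hcard := card_eq_of_charpoly_eq_prod hB
  have hneg : (s.map fun a => a - r) = (s.map fun a => r - a).map Neg.neg := by
    simp [Multiset.map_map]
  rw [← neg_sub, det_neg, ← eval_charpoly, hB, eval_multiset_prod, hneg, Multiset.prod_map_neg,
    Multiset.card_map, hcard, Multiset.map_map]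
  simp

end CommRing

variable {K : Type*} [Field K]

theorem det_aeval_eq_prod_eval [IsAlgClosed K] {B : Matrix n n K} {s : Multiset K}
    (hB : B.charpoly = (s.map fun a => X - C a).prod) (q : K[X]) :
    (aeval B q).det = (s.map q.eval).prod := by
  have hq := IsAlgClosed.splits q
  have hcard := card_eq_of_charpoly_eq_prod hB
  let φ : K[X] →* K := detMonoidHom.comp (aeval B : K[X] →ₐ[K] Matrix n n K).toMonoidHom
  have hφ : ∀ p, φ p = (aeval B p).det := fun _ => rfl
  calc (aeval B q).det
      = q.leadingCoeff ^ Fintype.card n * (q.roots.map fun r => (B - scalar n r).det).prod := by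
        rw [← hφ]
        conv_lhs => rw [hq.eq_prod_roots, map_mul, map_multiset_prod, Multiset.map_map]
        simp [φ, Function.comp_def, Algebra.algebraMap_eq_smul_one, scalar_apply,
          smul_eq_diagonal_mul]
    _ = q.leadingCoeff ^ Fintype.card n *
          (s.map fun a => (q.roots.map fun r => a - r).prod).prod := by
        simp_rw [det_sub_scalar_eq_prod hB]
        rw [Multiset.prod_map_prod_map]
    _ = (s.map q.eval).prod := by
        simp_rw [hq.eval_eq_prod_roots, Multiset.prod_map_mul, Multiset.map_const',
          Multiset.prod_replicate, hcard]

theorem charpoly_aeval_eq_prod [IsAlgClosed K] {B : Matrix n n K} {s : Multiset K}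
    (hB : B.charpoly = (s.map fun a => X - C a).prod) (p : K[X]) :
    (aeval B p).charpoly = ((s.map p.eval).map fun a => X - C a).prod := by
  refine Polynomial.funext fun z => ?_
  have hz : scalar n z - aeval B p = aeval B (C z - p) := by
    simp [Algebra.algebraMap_eq_smul_one, scalar_apply, smul_eq_diagonal_mul]
  rw [eval_charpoly, hz, det_aeval_eq_prod_eval hB, eval_multiset_prod, Multiset.map_map,
    Multiset.map_map]
  simp only [eval_sub, eval_C, Function.comp_apply, eval_X]

theorem trace_aeval_eq_sum_of_isAlgClosed [IsAlgClosed K] {B : Matrix n n K} {s : Multiset K}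
    (hB : B.charpoly = (s.map fun a => X - C a).prod) (p : K[X]) :
    (aeval B p).trace = (s.map p.eval).sum := by
  rw [trace_eq_sum_roots_charpoly, charpoly_aeval_eq_prod hB, roots_multiset_prod_X_sub_C]

theorem trace_aeval_eq_sum {B : Matrix n n K} {s : Multiset K}
    (hB : B.charpoly = (s.map fun a => X - C a).prod) (p : K[X]) :
    (aeval B p).trace = (s.map p.eval).sum := by
  let L := AlgebraicClosure K
  let f : K →+* L := algebraMap K L
  have hBL : (B.map f).charpoly = ((s.map f).map fun a => X - C a).prod := by
    rw [charpoly_map, hB, Polynomial.map_multiset_prod, Multiset.map_map, Multiset.map_map]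
    simp
  have hmap : aeval (B.map f) p = (aeval B p).map f :=
    aeval_algHom_apply (Algebra.ofId K L).mapMatrix B p
  have heval : ∀ x, (p.map f).eval (f x) = f (p.eval x) := fun x => by
    rw [eval_map, eval₂_at_apply]
  apply f.injective
  rw [AddMonoidHom.map_trace, ← hmap, ← aeval_map_algebraMap L,
    trace_aeval_eq_sum_of_isAlgClosed hBL, map_multiset_sum, Multiset.map_map, Multiset.map_map]
  exact congrArg _ (Multiset.map_congr rfl fun x _ => heval x)

end Matrix

open Filter in
theorem eventually_mul_pow_lt_pow {a b : ℝ} (ha : 0 ≤ a) (hab : a < b) (c : ℝ) :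
    ∀ᶠ m : ℕ in atTop, c * a ^ m < b ^ m := by
  have hb : 0 < b := ha.trans_lt hab
  have hlim : Tendsto (fun m : ℕ => c * (a / b) ^ m) atTop (nhds 0) := by
    simpa using (tendsto_pow_atTop_nhds_zero_of_lt_one (div_nonneg ha hb.le)
      ((div_lt_one hb).2 hab)).const_mul c
  filter_upwards [hlim.eventually (gt_mem_nhds one_pos)] with m hm
  rw [div_pow, ← mul_div_assoc, div_lt_one (pow_pos hb m)] at hm
  exact hm

theorem stmt6_general (l1 l2 l3 l4 l5 : ℝ)
    (h23 : l2 ≥ l3) (h5 : l5 = -l1)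
    (htrace : l1 + l2 + l3 + l4 + l5 ≥ 0)
    (h3 : l3 > l1 + l2 + l3 + l4 + l5) :
    ¬ ∃ A : Matrix (Fin 5) (Fin 5) ℝ, (∀ i j, 0 ≤ A i j) ∧
      A.charpoly = (X - C l1) * (X - C l2) * (X - C l3) * (X - C l4) * (X - C l5) := by
  rintro ⟨A, hA, hchar⟩
  have hl3 : 0 < l3 := by linarith
  have hl24 : l2 < -l4 := by linarith
  obtain ⟨N, hN⟩ :=
    Filter.eventually_atTop.1 (eventually_mul_pow_lt_pow (hl3.le.trans h23) hl24 2)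
  set m := 2 * N + 1
  have hm : Odd m := odd_two_mul_add_one N
  have hspec : A.charpoly = ((↑[l1, l2, l3, l4, l5] : Multiset ℝ).map fun a => X - C a).prod := by
    rw [hchar]
    simp only [Multiset.map_coe, Multiset.prod_coe, List.map_cons, List.map_nil, List.prod_cons,
      List.prod_nil, mul_one, mul_assoc]
  have htr := Matrix.trace_aeval_eq_sum hspec (X ^ m)
  simp only [aeval_X_pow, Multiset.map_coe, Multiset.sum_coe, List.map_cons, List.map_nil,
    List.sum_cons, List.sum_nil, eval_pow, eval_X] at htr
  have hnonneg : 0 ≤ (A ^ m).trace :=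
    Finset.sum_nonneg fun i _ => Matrix.pow_apply_nonneg hA m i i
  have hl4m : l4 ^ m = -(-l4) ^ m := by rw [hm.neg_pow, neg_neg]
  have hl3m : l3 ^ m ≤ l2 ^ m := pow_le_pow_left₀ hl3.le h23 m
  have hdom := hN m (by omega)
  rw [htr, h5, hm.neg_pow, hl4m] at hnonneg
  linarith

theorem stmt6 (l1 l2 l3 l4 l5 : ℝ)
    (h12 : l1 ≥ l2) (h23 : l2 ≥ l3) (h34 : l3 ≥ l4) (h45 : l4 ≥ l5) (h5 : l5 = -l1)
    (htrace : l1 + l2 + l3 + l4 + l5 ≥ 0)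
    (h3 : l3 > l1 + l2 + l3 + l4 + l5) :
    ¬ ∃ A : Matrix (Fin 5) (Fin 5) ℝ, (∀ i j, 0 ≤ A i j) ∧
      A.charpoly = (X - C l1) * (X - C l2) * (X - C l3) * (X - C l4) * (X - C l5) :=
  stmt6_general l1 l2 l3 l4 l5 h23 h5 htrace h3
end

section
/- Let λ₁ ≥ λ₂ ≥ λ₃ ≥ λ₄ ≥ λ₅ ≥ -λ₁ be real numbers with e₁ ≥ 0 and λ₃ > e₁, where e₁ = λ₁+...+λ₅. Then the discriminant Δ = e₁² - 2(e₂ + λ₃² + λ₅²) of the quadratic m(z) = -z² + e₁z - (1/2)(e₂+λ₃²+λ₅²) satisfies Δ ≥ λ₂² > 0, and m(z) ≥ 0 for every z with 0 ≤ z ≤ e₁/2. -/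
/-!
Since `e₁² - 2 e₂ = ∑ λᵢ²`, the discriminant is `Δ = λ₁² + λ₂² + λ₄² - λ₃² - λ₅²`, and
`Δ - λ₂² = (λ₁² - λ₅²) + (λ₄² - λ₃²)`. Both brackets are nonnegative: `λ₃ > e₁` together with `λ₁ + λ₅ ≥ 0`
forces `λ₃ + λ₄ < 0`, i.e. `|λ₃| ≤ -λ₄`; hence `λ₅ ≤ λ₄ < 0` and `|λ₅| ≤ λ₁`.
As `0 ≤ e₁ < λ₃ ≤ λ₂`, also `Δ ≥ λ₂² ≥ e₁²`, so the constant term of `m` is nonnegative and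
`m(z) = z (e₁ - z) + m(0) ≥ 0` on `[0, e₁]`.
-/

theorem sq_add_five_sub_two_mul_esymm_two (a b c d e : ℝ) :
    (a + b + c + d + e) ^ 2
        - 2 * (a*b + a*c + a*d + a*e + b*c + b*d + b*e + c*d + c*e + d*e)
      = a ^ 2 + b ^ 2 + c ^ 2 + d ^ 2 + e ^ 2 := by
  ring

theorem neg_sq_add_mul_sub_nonneg {b c z : ℝ} (hc : c ≤ 0) (hz : 0 ≤ z) (hzb : z ≤ b) :
    0 ≤ -z ^ 2 + b * z - c := by
  nlinarith [mul_nonneg hz (sub_nonneg.mpr hzb)]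

theorem stmt8_general (l1 l2 l3 l4 l5 : ℝ)
    (h23 : l2 ≥ l3) (h34 : l3 ≥ l4) (h45 : l4 ≥ l5) (h5 : l5 ≥ -l1)
    (he1 : l1 + l2 + l3 + l4 + l5 ≥ 0)
    (h3 : l3 > l1 + l2 + l3 + l4 + l5) :
    ((l1 + l2 + l3 + l4 + l5)^2
      - 2 * ((l1*l2+l1*l3+l1*l4+l1*l5+l2*l3+l2*l4+l2*l5+l3*l4+l3*l5+l4*l5) + l3^2 + l5^2)
      ≥ l2^2 ∧ l2^2 > 0) ∧
    ∀ z : ℝ, 0 ≤ z → z ≤ (l1 + l2 + l3 + l4 + l5) / 2 →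
      -z^2 + (l1 + l2 + l3 + l4 + l5) * z
        - (1/2) * ((l1*l2+l1*l3+l1*l4+l1*l5+l2*l3+l2*l4+l2*l5+l3*l4+l3*l5+l4*l5) + l3^2 + l5^2)
      ≥ 0 := by
  have hsum := sq_add_five_sub_two_mul_esymm_two l1 l2 l3 l4 l5
  have h15 : l5 ^ 2 ≤ l1 ^ 2 := sq_le_sq' h5 (by linarith)
  have h43 : l3 ^ 2 ≤ (-l4) ^ 2 := sq_le_sq' (by linarith) (by linarith)
  have he12 : (l1 + l2 + l3 + l4 + l5) ^ 2 ≤ l2 ^ 2 := sq_le_sq' (by linarith) (by linarith)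
  have hΔ : (l1 + l2 + l3 + l4 + l5)^2
      - 2 * ((l1*l2+l1*l3+l1*l4+l1*l5+l2*l3+l2*l4+l2*l5+l3*l4+l3*l5+l4*l5) + l3^2 + l5^2)
      ≥ l2^2 := by
    rw [neg_sq] at h43
    linarith
  refine ⟨⟨hΔ, pow_pos (by linarith) 2⟩, fun z hz hze ↦ ?_⟩
  exact neg_sq_add_mul_sub_nonneg (by linarith) hz (by linarith)

theorem stmt8 (l1 l2 l3 l4 l5 : ℝ)
    (h12 : l1 ≥ l2) (h23 : l2 ≥ l3) (h34 : l3 ≥ l4) (h45 : l4 ≥ l5) (h5 : l5 ≥ -l1)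
    (he1 : l1 + l2 + l3 + l4 + l5 ≥ 0)
    (h3 : l3 > l1 + l2 + l3 + l4 + l5) :
    ((l1 + l2 + l3 + l4 + l5)^2
      - 2 * ((l1*l2+l1*l3+l1*l4+l1*l5+l2*l3+l2*l4+l2*l5+l3*l4+l3*l5+l4*l5) + l3^2 + l5^2)
      ≥ l2^2 ∧ l2^2 > 0) ∧
    ∀ z : ℝ, 0 ≤ z → z ≤ (l1 + l2 + l3 + l4 + l5) / 2 →
      -z^2 + (l1 + l2 + l3 + l4 + l5) * z
        - (1/2) * ((l1*l2+l1*l3+l1*l4+l1*l5+l2*l3+l2*l4+l2*l5+l3*l4+l3*l5+l4*l5) + l3^2 + l5^2)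
      ≥ 0 :=
  stmt8_general l1 l2 l3 l4 l5 h23 h34 h45 h5 he1 h3
end

section
/- Let σ = (λ₁,...,λ₅) be real numbers with λ₁ ≥ λ₂ ≥ λ₃ ≥ λ₄ ≥ λ₅ > -λ₁, e₁(σ) ≥ 0, λ₃ > e₁(σ), r(σ) = 0, and u(σ) > 0. Then λ₂ + λ₃ + λ₅ < 0. -/
/-!
In the coordinates a = λ₁ + λ₅, b = λ₃ - e₁, s = λ₂ + λ₃ + λ₅, p = λ₂ - λ₃, q = λ₄ - λ₅,
the polynomial -r is a polynomial in a, b, s, p, q with positive coefficients, among them the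
monomial a²b. So if s ≥ 0, then a, b > 0 and p, q ≥ 0 force r < 0, contradicting r = 0.
-/

-- The paper's r(σ) at σ = (l1, …, l5).
def r (l1 l2 l3 l4 l5 : ℝ) : ℝ :=
  (l1*l2*l3 + l1*l2*l4 + l1*l2*l5 + l1*l3*l4 + l1*l3*l5 + l1*l4*l5 + l2*l3*l4 + l2*l3*l5
    + l2*l4*l5 + l3*l4*l5) + (l1 + l2 + l3 + l4 + l5) * (l2^2 + l5^2)

theorem r_neg_of_coords {a b s p q : ℝ} (ha : 0 < a) (hb : 0 < b) (hs : 0 ≤ s) (hp : 0 ≤ p)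
    (hq : 0 ≤ q) :
    r (3*a + 2*b + s + p + 2*q) (a + b + s + p + q) (a + b + s + q) (-2*a - 2*b - s - p - q)
      (-2*a - 2*b - s - p - 2*q) < 0 := by
  have h : r (3*a + 2*b + s + p + 2*q) (a + b + s + p + q) (a + b + s + q)
      (-2*a - 2*b - s - p - q) (-2*a - 2*b - s - p - 2*q) =
      -(2*a^2*b + 4*a^2*s + 4*a*b^2 + 8*a*b*s + 3*a*b*p + 4*a*b*q + 2*a*s^2 + 2*a*s*p
        + 3*a*s*q + 2*b^3 + 4*b^2*s + 3*b^2*p + 4*b^2*q + 2*b*s^2 + 3*b*s*p + 4*b*s*q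
        + b*p^2 + 3*b*p*q + 2*b*q^2) := by
    unfold r
    ring
  rw [h, neg_neg_iff_pos]
  positivity

theorem r_neg {l1 l2 l3 l4 l5 : ℝ} (h23 : l3 ≤ l2) (h45 : l5 ≤ l4) (h15 : 0 < l1 + l5)
    (h3 : l1 + l2 + l3 + l4 + l5 < l3) (hS : 0 ≤ l2 + l3 + l5) : r l1 l2 l3 l4 l5 < 0 := by
  have key := r_neg_of_coords h15 (b := -(l1 + l2 + l4 + l5)) (by linarith) hS
    (p := l2 - l3) (by linarith) (q := l4 - l5) (by linarith)
  convert key using 1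
  congr 1 <;> ring

theorem stmt13_general (l1 l2 l3 l4 l5 : ℝ)
    (h23 : l2 ≥ l3) (h45 : l4 ≥ l5) (h5 : l5 > -l1)
    (h3 : l3 > l1 + l2 + l3 + l4 + l5)
    (hr : (l1*l2*l3+l1*l2*l4+l1*l2*l5+l1*l3*l4+l1*l3*l5+l1*l4*l5+l2*l3*l4+l2*l3*l5+l2*l4*l5+l3*l4*l5)
        + (l1 + l2 + l3 + l4 + l5) * (l2^2 + l5^2) = 0) :
    l2 + l3 + l5 < 0 := by
  by_contra! hS
  exact (r_neg h23 h45 (by linarith) h3 hS).ne hr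

theorem stmt13 (l1 l2 l3 l4 l5 : ℝ)
    (h12 : l1 ≥ l2) (h23 : l2 ≥ l3) (h34 : l3 ≥ l4) (h45 : l4 ≥ l5) (h5 : l5 > -l1)
    (he1 : l1 + l2 + l3 + l4 + l5 ≥ 0)
    (h3 : l3 > l1 + l2 + l3 + l4 + l5)
    (hr : (l1*l2*l3+l1*l2*l4+l1*l2*l5+l1*l3*l4+l1*l3*l5+l1*l4*l5+l2*l3*l4+l2*l3*l5+l2*l4*l5+l3*l4*l5)
        + (l1 + l2 + l3 + l4 + l5) * (l2^2 + l5^2) = 0)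
    (hu : -(l1*l2+l1*l3+l1*l4+l1*l5+l2*l3+l2*l4+l2*l5+l3*l4+l3*l5+l4*l5) - l2^2 - l5^2 > 0) :
    l2 + l3 + l5 < 0 :=
  stmt13_general l1 l2 l3 l4 l5 h23 h45 h5 h3 hr
end

section
/- Fix i ∈ {2,...,n}. Suppose that for every real list σ = (λ₁,...,λₙ) realizable as the spectrum of a symmetric nonnegative matrix with Perron eigenvalue λ₁, there exists s₀ > 0 such that σᵢ^{-s} (replace λ₁ by λ₁+s and λᵢ by λᵢ-s) is realizable by a symmetric nonnegative matrix with Perron eigenvalue λ₁+s for all 0 ≤ s < s₀. Then σᵢ^{-s} is realizable by a symmetric nonnegative matrix for every s > 0. -/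
open Polynomial

/-- `μ` is the spectrum of an `n×n` symmetric nonnegative matrix. -/
def SymRealizable {n : ℕ} (μ : Fin n → ℝ) : Prop :=
  ∃ A : Matrix (Fin n) (Fin n) ℝ, A.IsSymm ∧ (∀ i j, 0 ≤ A i j) ∧
    A.charpoly = ∏ j, (X - C (μ j))

/-- `μ` is the spectrum of an `n×n` symmetric nonnegative matrix with Perron
eigenvalue `μ 0`. -/
def SymRealizablePerron {n : ℕ} [NeZero n] (μ : Fin n → ℝ) : Prop :=
  SymRealizable μ ∧ ∀ j, |μ j| ≤ μ 0


/-! The spectra realizable by symmetric nonnegative matrices form a closed set: by the spectral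
theorem, and since the entries of a unitary matrix have norm at most `1`, a realizing matrix has
entries bounded by `∑ |λₖ|`, so along a convergent sequence of spectra the realizing matrices have a
convergent subsequence, and symmetry, nonnegativity and the characteristic polynomial pass to the
limit. Hence the set of `t ≥ 0` for which the perturbed spectrum is Perron-realizable is closed; it
contains `0` and, by hypothesis, a right neighbourhood of each of its points, so by continuous
induction it contains all of `[0, ∞)`. -/

open Topology

theorem Polynomial.roots_prod_X_sub_C_univ {R ι : Type*} [CommRing R] [IsDomain R] [Fintype ι]
    (f : ι → R) : (∏ j, (X - C (f j))).roots = Finset.univ.val.map f := by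
  rw [roots_prod _ _ (Finset.prod_ne_zero_iff.2 fun j _ => X_sub_C_ne_zero (f j))]
  simp [Finset.univ.val.bind_singleton]

namespace Matrix.IsHermitian

variable {𝕜 ι : Type*} [RCLike 𝕜] [Fintype ι] [DecidableEq ι] {A : Matrix ι ι 𝕜}

theorem norm_apply_le_sum_abs_eigenvalues (hA : A.IsHermitian) (i j : ι) :
    ‖A i j‖ ≤ ∑ k, |hA.eigenvalues k| := by
  set U : Matrix ι ι 𝕜 := (hA.eigenvectorUnitary : Matrix ι ι 𝕜)
  have hU : U ∈ unitaryGroup ι 𝕜 := hA.eigenvectorUnitary.2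
  have hentry : A i j = ∑ k, U i k * hA.eigenvalues k * star (U j k) := by
    conv_lhs => rw [hA.spectral_theorem]
    simp [U, mul_apply, diagonal_apply]
  rw [hentry]
  refine (norm_sum_le _ _).trans (Finset.sum_le_sum fun k _ => ?_)
  have hik := entry_norm_bound_of_unitary hU i k
  have hjk := entry_norm_bound_of_unitary hU j k
  rw [norm_mul, norm_mul, norm_star, RCLike.norm_ofReal]
  calc ‖U i k‖ * |hA.eigenvalues k| * ‖U j k‖ ≤ 1 * |hA.eigenvalues k| * 1 := by gcongr
    _ = |hA.eigenvalues k| := by ring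

theorem sum_abs_eigenvalues_eq (hA : A.IsHermitian) {μ : ι → ℝ}
    (h : A.charpoly = ∏ j, (X - C (μ j : 𝕜))) : ∑ k, |hA.eigenvalues k| = ∑ k, |μ k| := by
  have hroots := congrArg (fun p : 𝕜[X] => (p.roots.map norm).sum) (hA.charpoly_eq.symm.trans h)
  simp only [roots_prod_X_sub_C_univ, Multiset.map_map] at hroots
  rw [Finset.sum_eq_multiset_sum, Finset.sum_eq_multiset_sum]
  convert hroots using 2 <;> simp

end Matrix.IsHermitian

theorem Matrix.IsSymm.abs_apply_le_of_charpoly_eq {ι : Type*} [Fintype ι] [DecidableEq ι]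
    {A : Matrix ι ι ℝ} (hA : A.IsSymm) {μ : ι → ℝ} (h : A.charpoly = ∏ j, (X - C (μ j)))
    (i j : ι) : |A i j| ≤ ∑ k, |μ k| := by
  have hH : A.IsHermitian := Matrix.isHermitian_iff_isSymm.2 hA
  rw [← hH.sum_abs_eigenvalues_eq h]
  exact hH.norm_apply_le_sum_abs_eigenvalues i j

def SymRealizes {n : ℕ} (A : Matrix (Fin n) (Fin n) ℝ) (μ : Fin n → ℝ) : Prop :=
  A.IsSymm ∧ (∀ i j, 0 ≤ A i j) ∧ A.charpoly = ∏ j, (X - C (μ j))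

theorem isClosed_setOf_symRealizes (n : ℕ) :
    IsClosed {p : Matrix (Fin n) (Fin n) ℝ × (Fin n → ℝ) | SymRealizes p.1 p.2} := by
  have hset : {p : Matrix (Fin n) (Fin n) ℝ × (Fin n → ℝ) | SymRealizes p.1 p.2} =
      {p | p.1.transpose = p.1} ∩ (⋂ i, ⋂ j, {p | 0 ≤ p.1 i j}) ∩
        ⋂ x : ℝ, {p | (Matrix.scalar (Fin n) x - p.1).det = ∏ j, (x - p.2 j)} := by
    ext p
    simp only [SymRealizes, Matrix.IsSymm, Set.mem_ofPred_eq, Set.mem_inter_iff, Set.mem_iInter,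
      ← Matrix.eval_charpoly, and_assoc]
    refine and_congr_right' (and_congr_right' ⟨fun h x => by simp [h, eval_prod], fun h => ?_⟩)
    exact Polynomial.funext fun x => by simp [h x, eval_prod]
  rw [hset]
  refine ((isClosed_eq continuous_fst.matrix_transpose continuous_fst).inter
    (isClosed_iInter fun i => isClosed_iInter fun j => ?_)).inter (isClosed_iInter fun x => ?_)
  · exact isClosed_le continuous_const (continuous_fst.matrix_elem i j)
  · exact isClosed_eq ((continuous_const.sub continuous_fst).matrix_det)
      (continuous_finsetProd _ fun j _ =>
        continuous_const.sub ((continuous_apply j).comp continuous_snd))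

theorem isClosed_setOf_symRealizable (n : ℕ) : IsClosed {μ : Fin n → ℝ | SymRealizable μ} := by
  refine IsSeqClosed.isClosed fun μs μ hμs hlim => ?_
  choose A hA using hμs
  obtain ⟨M, hM⟩ := ((continuous_finsetSum _ fun j _ => (continuous_apply j).abs).tendsto μ
    |>.comp hlim).bddAbove_range
  set K : Set (Fin n → Fin n → ℝ) :=
    Set.univ.pi fun _ => Set.univ.pi fun _ => Set.Icc (-M) M
  have hK : IsCompact K := isCompact_univ_pi fun _ => isCompact_univ_pi fun _ => isCompact_Icc
  have hAK : ∀ k, A k ∈ K := fun k =>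
    Set.mem_univ_pi.2 fun i => Set.mem_univ_pi.2 fun j => abs_le.1
      (((hA k).1.abs_apply_le_of_charpoly_eq (hA k).2.2 i j).trans (hM ⟨k, rfl⟩))
  obtain ⟨B, -, φ, hφ, hB⟩ := hK.tendsto_subseq hAK
  exact ⟨B, (isClosed_setOf_symRealizes n).mem_of_tendsto
    (hB.prodMk_nhds (hlim.comp hφ.tendsto_atTop)) (Filter.Eventually.of_forall fun k => hA (φ k))⟩

theorem isClosed_setOf_symRealizablePerron (n : ℕ) [NeZero n] :
    IsClosed {μ : Fin n → ℝ | SymRealizablePerron μ} := by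
  simp only [SymRealizablePerron, Set.ofPred_and, Set.ofPred_forall]
  exact (isClosed_setOf_symRealizable n).inter
    (isClosed_iInter fun j => isClosed_le (continuous_apply j).abs (continuous_apply 0))

section Transfer

open Function

variable {ι : Type*} [DecidableEq ι]

def transfer (σ : ι → ℝ) (a b : ι) (t : ℝ) : ι → ℝ :=
  update (update σ a (σ a + t)) b (σ b - t)

theorem transfer_zero (σ : ι → ℝ) (a b : ι) : transfer σ a b 0 = σ := by
  simp [transfer]

theorem transfer_transfer (σ : ι → ℝ) (a b : ι) (t u : ℝ) :
    transfer (transfer σ a b t) a b u = transfer σ a b (t + u) := by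
  ext j
  by_cases hb : j = b <;> by_cases ha : j = a <;> by_cases hab : a = b <;>
    simp_all [transfer, update_apply] <;> ring

theorem continuous_transfer (σ : ι → ℝ) (a b : ι) : Continuous (transfer σ a b) := by
  unfold transfer
  fun_prop

end Transfer

theorem stmt18_general {n : ℕ} [NeZero n] (i : Fin n)
    (H : ∀ σ : Fin n → ℝ, SymRealizablePerron σ →
      ∃ s₀ > 0, ∀ s : ℝ, 0 ≤ s → s < s₀ →
        SymRealizablePerron (Function.update (Function.update σ 0 (σ 0 + s)) i (σ i - s)))
    (σ : Fin n → ℝ) (hσ : SymRealizablePerron σ) (s : ℝ) (hs : 0 < s) :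
    SymRealizable (Function.update (Function.update σ 0 (σ 0 + s)) i (σ i - s)) := by
  set good : Set ℝ := {t | SymRealizablePerron (transfer σ 0 i t)}
  have hclosed : IsClosed good :=
    (isClosed_setOf_symRealizablePerron n).preimage (continuous_transfer σ 0 i)
  have hstep : ∀ t ∈ good, good ∈ 𝓝[>] t := by
    intro t ht
    obtain ⟨s₀, hs₀, hsmall⟩ := H _ ht
    filter_upwards [Ioo_mem_nhdsGT (lt_add_of_pos_right t hs₀)] with u hu
    have hu' := hsmall (u - t) (by linarith [hu.1]) (by linarith [hu.2])
    rwa [← transfer, transfer_transfer, add_sub_cancel] at hu'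
  have hIcc : Set.Icc 0 s ⊆ good :=
    (hclosed.inter isClosed_Icc).Icc_subset_of_forall_mem_nhdsWithin
      (by simpa [good, transfer_zero] using hσ) fun t ht => hstep t ht.1
  exact (hIcc ⟨hs.le, le_rfl⟩).1

theorem stmt18 {n : ℕ} [NeZero n] (i : Fin n) (hi : i ≠ 0)
    (H : ∀ σ : Fin n → ℝ, SymRealizablePerron σ →
      ∃ s₀ > 0, ∀ s : ℝ, 0 ≤ s → s < s₀ →
        SymRealizablePerron (Function.update (Function.update σ 0 (σ 0 + s)) i (σ i - s)))
    (σ : Fin n → ℝ) (hσ : SymRealizablePerron σ) (s : ℝ) (hs : 0 < s) :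
    SymRealizable (Function.update (Function.update σ 0 (σ 0 + s)) i (σ i - s)) :=
  stmt18_general i H σ hσ s hs
end
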